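/- Let ν be an upwards-skip-free probability measure on ℤ with ν(1) > 0 and (Z_k) the walk with step law ν started at 0, T = inf{k : Z_k < 0}. For every n ≥ 1 and nonnegative integers x_0,...,x_{n-1} with x_{n-1} = 0, the probability P_0(T = n, Z_{T-1-k} = x_k for 0 ≤ k ≤ n-1) equals ν(x_{n-2}-x_{n-1})···ν(x_0-x_1)·ν((-∞,-x_0)); in particular conditionally on Z_{T-1}, the time-reversed pre-T path (Z_{T-1}, Z_{T-2}, ..., Z_0) has the same law as the walk with step distribution ν̂(k) := ν(-k) started at Z_{T-1} and killed at its first entrance into (-∞,0). -/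

import Mathlib

open MeasureTheory ProbabilityTheory

/-
On the event `{T = n}` with prescribed reversed path `x`, the steps of the walk are all
determined: `ξ_j = x_{n-2-j} - x_{n-1-j}` for `j < n - 1`, while the last step only has to
jump below `0`, i.e. `ξ_{n-1} < -x_0`. Conversely these conditions on the first `n` steps
force the path, and since `x ≥ 0` they force `T = n`. The event is therefore a cylinder set
for the independent steps, and its probability is a product of `ν`-masses.
-/

/-- The set to which the `j`-th step must belong when the walk, read backwards from time
`m`, follows `x` and then jumps below `0` at time `m + 1`. -/
def reversedPathStepSet (x : ℕ → ℤ) (m j : ℕ) : Set ℤ :=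
  if j = m then Set.Iio (-x 0) else {x (m - 1 - j) - x (m - j)}

lemma measurableSet_reversedPathStepSet (x : ℕ → ℤ) (m j : ℕ) :
    MeasurableSet (reversedPathStepSet x m j) := by
  unfold reversedPathStepSet
  split
  · exact measurableSet_Iio
  · exact measurableSet_singleton _

lemma sInf_setOf_neg_eq_succ_iff {z : ℕ → ℤ} {m : ℕ} (hnonneg : ∀ k ≤ m, 0 ≤ z k) :
    sInf {k | z k < 0} = m + 1 ↔ z (m + 1) < 0 := by
  constructor
  · intro h
    have hne : {k | z k < 0}.Nonempty := by
      by_contra hempty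
      rw [Set.not_nonempty_iff_eq_empty.mp hempty, Nat.sInf_empty] at h
      omega
    simpa [h] using Nat.sInf_mem hne
  · intro h
    refine le_antisymm (Nat.sInf_le h) (le_csInf ⟨m + 1, h⟩ fun k hk => ?_)
    by_contra! hlt
    exact absurd (hnonneg k (by omega)) (not_le.mpr hk)

lemma forall_eq_reverse_iff_forall_sub_eq {z x : ℕ → ℤ} {m : ℕ} (h0 : z 0 = x m) :
    (∀ j ≤ m, z j = x (m - j)) ↔ ∀ j < m, z (j + 1) - z j = x (m - 1 - j) - x (m - j) := by
  constructor
  · intro h j hj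
    rw [h (j + 1) hj, h j hj.le, show m - (j + 1) = m - 1 - j by omega]
  · intro h j
    induction j with
    | zero => simpa using h0
    | succ j ih =>
      intro hj
      have := h j hj
      rw [ih (by omega)] at this
      rw [show m - (j + 1) = m - 1 - j by omega]
      omega

lemma firstNeg_eq_and_reverse_eq_iff {z x : ℕ → ℤ} {m : ℕ} (hz0 : z 0 = 0)
    (hx : ∀ k < m + 1, 0 ≤ x k) (hxm : x m = 0) :
    (sInf {k | z k < 0} = m + 1 ∧ ∀ k < m + 1, z (sInf {k | z k < 0} - 1 - k) = x k) ↔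
      ∀ j < m + 1, z (j + 1) - z j ∈ reversedPathStepSet x m j := by
  have reindex : (∀ k < m + 1, z (m + 1 - 1 - k) = x k) ↔ ∀ j ≤ m, z j = x (m - j) := by
    refine ⟨fun h j hj => ?_, fun h k hk => ?_⟩
    · simpa [show m - (m - j) = j by omega] using h (m - j) (by omega)
    · simpa [show m - (m - k) = k by omega] using h (m - k) (by omega)
  have steps : (∀ j < m + 1, z (j + 1) - z j ∈ reversedPathStepSet x m j) ↔
      (∀ j < m, z (j + 1) - z j = x (m - 1 - j) - x (m - j)) ∧ z (m + 1) - z m < -x 0 := by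
    simp only [reversedPathStepSet, Nat.lt_succ_iff_lt_or_eq, or_imp, forall_and,
      forall_eq]
    refine and_congr (forall₂_congr fun j hj => ?_) Iff.rfl
    simp [hj.ne]
  rw [steps, ← forall_eq_reverse_iff_forall_sub_eq (hz0.trans hxm.symm)]
  constructor
  · rintro ⟨hT, hpath⟩
    rw [hT, reindex] at hpath
    have hzm : z m = x 0 := by simpa using hpath m le_rfl
    have hnonneg : ∀ k ≤ m, 0 ≤ z k := fun k hk => hpath k hk ▸ hx _ (by omega)
    exact ⟨hpath, by linarith [(sInf_setOf_neg_eq_succ_iff hnonneg).mp hT]⟩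
  · rintro ⟨hpath, hlast⟩
    have hzm : z m = x 0 := by simpa using hpath m le_rfl
    have hnonneg : ∀ k ≤ m, 0 ≤ z k := fun k hk => hpath k hk ▸ hx _ (by omega)
    have hT := (sInf_setOf_neg_eq_succ_iff hnonneg).mpr (by linarith)
    exact ⟨hT, by rwa [hT, reindex]⟩

lemma measure_iInter_preimage_eq_prod_of_iIndepFun {Ω ι : Type*} [MeasurableSpace Ω]
    {P : Measure Ω} {ν : Measure ℤ} {ξ : ι → Ω → ℤ} (hmeas : ∀ i, Measurable (ξ i))
    (hindep : iIndepFun ξ P) (hlaw : ∀ i, P.map (ξ i) = ν) (s : Finset ι) {S : ι → Set ℤ}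
    (hS : ∀ i, MeasurableSet (S i)) :
    P (⋂ i ∈ s, ξ i ⁻¹' S i) = ∏ i ∈ s, ν (S i) := by
  rw [iIndepFun_iff_measure_inter_preimage_eq_mul.mp hindep s fun i _ => hS i]
  refine Finset.prod_congr rfl fun i _ => ?_
  rw [← hlaw i, Measure.map_apply (hmeas i) (hS i)]

lemma prod_reversedPathStepSet (ν : Measure ℤ) (x : ℕ → ℤ) (m : ℕ) :
    ∏ j ∈ Finset.range (m + 1), ν (reversedPathStepSet x m j)
      = (∏ k ∈ Finset.range m, ν {x k - x (k + 1)}) * ν (Set.Iio (-x 0)) := by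
  rw [Finset.prod_range_succ, ← Finset.prod_range_reflect (fun k => ν {x k - x (k + 1)}) m]
  congr 1
  · refine Finset.prod_congr rfl fun j hj => ?_
    rw [Finset.mem_range] at hj
    simp only [reversedPathStepSet, if_neg hj.ne, show m - 1 - j + 1 = m - j by omega]
  · simp [reversedPathStepSet]

theorem stmt3_general
    {Ω : Type*} [MeasurableSpace Ω] (P : Measure Ω)
    (ν : Measure ℤ)
    (ξ : ℕ → Ω → ℤ) (hmeas : ∀ i, Measurable (ξ i))
    (hindep : iIndepFun ξ P)
    (hlaw : ∀ i, P.map (ξ i) = ν)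
    (Z : ℕ → Ω → ℤ) (hZ : ∀ n ω, Z n ω = ∑ i ∈ Finset.range n, ξ i ω)
    (T : Ω → ℕ) (hT : ∀ ω, T ω = sInf {k | Z k ω < 0}) :
    ∀ n : ℕ, 1 ≤ n → ∀ x : ℕ → ℤ, (∀ k < n, 0 ≤ x k) → x (n - 1) = 0 →
      P {ω | T ω = n ∧ ∀ k < n, Z (T ω - 1 - k) ω = x k}
        = (∏ k ∈ Finset.range (n - 1), ν {x k - x (k + 1)}) * ν (Set.Iio (-(x 0))) := by
  intro n hn x hx hxm
  obtain ⟨m, rfl⟩ : ∃ m, n = m + 1 := ⟨n - 1, by omega⟩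
  rw [Nat.add_sub_cancel] at hxm ⊢
  have hstep : ∀ j ω, Z (j + 1) ω - Z j ω = ξ j ω := fun j ω => by
    rw [hZ, hZ, Finset.sum_range_succ]; ring
  have hevent : {ω | T ω = m + 1 ∧ ∀ k < m + 1, Z (T ω - 1 - k) ω = x k}
      = ⋂ j ∈ Finset.range (m + 1), ξ j ⁻¹' reversedPathStepSet x m j := by
    ext ω
    have := firstNeg_eq_and_reverse_eq_iff (z := (Z · ω)) (by simp [hZ]) hx hxm
    simpa [← hT, hstep] using this
  rw [hevent, measure_iInter_preimage_eq_prod_of_iIndepFun hmeas hindep hlaw _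
    (measurableSet_reversedPathStepSet x m), prod_reversedPathStepSet]

/-- Finite-dimensional law of the time-reversed pre-`T` path of an upwards-skip-free
random walk: for nonnegative `x_0, …, x_{n-1}` with `x_{n-1} = 0`,
`P(T = n, Z_{T-1-k} = x_k ∀ k < n) = ν(x_{n-2}-x_{n-1}) ⋯ ν(x_0-x_1) · ν((-∞,-x_0))`,
i.e. conditionally on `Z_{T-1}` the reversed path is a walk with step law `ν̂ = ν(-·)`
started at `Z_{T-1}` and killed upon entering the negatives. -/
theorem stmt3
    {Ω : Type*} [MeasurableSpace Ω] (P : Measure Ω) [IsProbabilityMeasure P]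
    (ν : Measure ℤ) [IsProbabilityMeasure ν]
    (hskip : ν (Set.Ioi (1 : ℤ)) = 0) (hν1 : 0 < ν {1})
    (ξ : ℕ → Ω → ℤ) (hmeas : ∀ i, Measurable (ξ i))
    (hindep : iIndepFun ξ P)
    (hlaw : ∀ i, P.map (ξ i) = ν)
    (Z : ℕ → Ω → ℤ) (hZ : ∀ n ω, Z n ω = ∑ i ∈ Finset.range n, ξ i ω)
    (T : Ω → ℕ) (hT : ∀ ω, T ω = sInf {k | Z k ω < 0})
    (hfin : ∀ᵐ ω ∂P, ∃ k, Z k ω < 0) :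
    ∀ n : ℕ, 1 ≤ n → ∀ x : ℕ → ℤ, (∀ k < n, 0 ≤ x k) → x (n - 1) = 0 →
      P {ω | T ω = n ∧ ∀ k < n, Z (T ω - 1 - k) ω = x k}
        = (∏ k ∈ Finset.range (n - 1), ν {x k - x (k + 1)}) * ν (Set.Iio (-(x 0))) :=
  stmt3_general P ν ξ hmeas hindep hlaw Z hZ T hT
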